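/- Let a1, a2, a3 ∈ (0, 1/2] and suppose there exists q > 0 such that (x1, x2, x3) = (q*sqrt(a2+a3), q*sqrt(a1+a3), q*sqrt(a1+a2)) satisfies system (S) (this is exactly the condition that the corresponding singular point of the reduced planar Ricci flow system has σ = ρ^2 - 4δ = 0). Then one of the following holds: (i) a1 = a2 = a3; or (ii) there exist s with sqrt(2*sqrt(2) - 2)/2 < s < sqrt(2)/2 and indices {i,j,k} = {1,2,3} such that a_i = a_j = (2*s^2 - 1)^2/(8*s^2) and a_k = (4*s^4 + 4*s^2 - 1)/(8*s^2). -/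

import Mathlib

noncomputable section
open Real Set

/-- First equation of system (S). -/
def eqS1 (a1 a2 a3 x1 x2 x3 : ℝ) : Prop :=
  (a2 + a3)*(a1*x2^2 + a1*x3^2 - x2*x3) + (a2*x2 + a3*x3)*x1
    - (a1*a2 + a1*a3 + 2*a2*a3)*x1^2 = 0

/-- Second equation of system (S). -/
def eqS2 (a1 a2 a3 x1 x2 x3 : ℝ) : Prop :=
  (a1 + a3)*(a2*x1^2 + a2*x3^2 - x1*x3) + (a1*x1 + a3*x3)*x2
    - (a1*a2 + 2*a1*a3 + a2*a3)*x2^2 = 0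

/-!
On the ray `q • (u, v, w)` with `u = √(a2+a3)`, `v = √(a1+a3)`, `w = √(a1+a2)`, the equations of
(S), divided by `q² x_i`, become `u (v w + 2 a2 a3 - 2 a1²) = a2 v + a3 w` and its `1 ↔ 2` swap,
and together they imply the `1 ↔ 3` swap. Combining two of these with weight `u + v` leaves
`(a1 - a2)` times a factor which, if nonzero, gives `a1 + 2 a2 a3 - 2 a1² = v (u + v) (1 - 2 Σ a)`;
doing the same with `a3` instead of `a2` forces `v = w`. So two parameters agree, say `a1 = a2`,
and the first equation reduces to `√(2 a1) = √(a1 + a3) (1 + 2 a1 - 2 a3)`. Squaring and dividing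
by `a1 - a3` gives `8 a1 t = (2 t - 1)²` for `t = 1 + a1 - a3`, which `t = 1 / (4 s²)`
parametrizes; the range of `s` encodes `a3 > 0` and `t > 1/2`.
-/

section ReducedEquations

variable {a b c u v w : ℝ}

theorem eqS2_iff_eqS1 {a1 a2 a3 x1 x2 x3 : ℝ} :
    eqS2 a1 a2 a3 x1 x2 x3 ↔ eqS1 a2 a1 a3 x2 x1 x3 := by
  unfold eqS1 eqS2
  ring_nf

theorem reduced_of_eqS1 {q : ℝ} (hq : q ≠ 0) (hu : u ≠ 0) (hu2 : u ^ 2 = b + c)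
    (hv2 : v ^ 2 = a + c) (hw2 : w ^ 2 = a + b) (h : eqS1 a b c (q * u) (q * v) (q * w)) :
    u * (v * w + 2 * b * c - 2 * a ^ 2) = b * v + c * w := by
  unfold eqS1 at h
  have hmul : (q ^ 2 * u) * (u * (v * w + 2 * b * c - 2 * a ^ 2) - (b * v + c * w)) = 0 := by
    linear_combination (-1) * h
      + (q ^ 2 * (v * w + 2 * b * c - 2 * a ^ 2 - (a * b + a * c + 2 * b * c))) * hu2
      + (q ^ 2 * (a * (b + c))) * hv2 + (q ^ 2 * (a * (b + c))) * hw2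
  exact sub_eq_zero.1 ((mul_eq_zero.1 hmul).resolve_left (by positivity))

theorem reduced_third (hw : w ≠ 0) (hu2 : u ^ 2 = b + c) (hv2 : v ^ 2 = a + c)
    (hw2 : w ^ 2 = a + b) (h1 : u * (v * w + 2 * b * c - 2 * a ^ 2) = b * v + c * w)
    (h2 : v * (u * w + 2 * a * c - 2 * b ^ 2) = a * u + c * w) :
    w * (u * v + 2 * a * b - 2 * c ^ 2) = a * u + b * v := by
  have hmul : w * (w * (u * v + 2 * a * b - 2 * c ^ 2) - (a * u + b * v)) = 0 := by
    linear_combination (-u) * h1 + (-v) * h2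
      + (v * w + 2 * b * c - 2 * a ^ 2) * hu2 + (u * w + 2 * a * c - 2 * b ^ 2) * hv2
      + (u * v + 2 * a * b - 2 * c ^ 2) * hw2
  exact sub_eq_zero.1 ((mul_eq_zero.1 hmul).resolve_left hw)

theorem eq_or_eq_mul_of_reduced (hu2 : u ^ 2 = b + c) (hv2 : v ^ 2 = a + c)
    (h1 : u * (v * w + 2 * b * c - 2 * a ^ 2) = b * v + c * w)
    (h2 : v * (u * w + 2 * a * c - 2 * b ^ 2) = a * u + c * w) :
    a = b ∨ a + 2 * b * c - 2 * a ^ 2 = v * (u + v) * (1 - 2 * (a + b + c)) := by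
  have hmul : (a - b) * (v * (u + v) * (1 - 2 * (a + b + c)) - (a + 2 * b * c - 2 * a ^ 2)) = 0 := by
    linear_combination (u + v) * h1 - (u + v) * h2 - (a + 2 * b * c - 2 * a ^ 2) * hu2
      + (a + 2 * b * c - 2 * a ^ 2) * hv2
  rcases mul_eq_zero.1 hmul with h | h
  · exact Or.inl (sub_eq_zero.1 h)
  · exact Or.inr (sub_eq_zero.1 h).symm

theorem two_params_eq_of_reduced (ha : 0 < a) (hb : 0 < b) (hc : 0 < c) (hu : 0 < u)
    (hv : 0 < v) (hw : 0 < w) (hu2 : u ^ 2 = b + c) (hv2 : v ^ 2 = a + c) (hw2 : w ^ 2 = a + b)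
    (h1 : u * (v * w + 2 * b * c - 2 * a ^ 2) = b * v + c * w)
    (h2 : v * (u * w + 2 * a * c - 2 * b ^ 2) = a * u + c * w) :
    a = b ∨ a = c ∨ b = c := by
  have h3 := reduced_third hw.ne' hu2 hv2 hw2 h1 h2
  rcases eq_or_eq_mul_of_reduced hu2 hv2 h1 h2 with hab | hFv
  · exact Or.inl hab
  rcases eq_or_eq_mul_of_reduced (b := c) (c := b) (u := u) (v := w) (w := v) (by linarith) hw2
      (by linear_combination h1) (by linear_combination h3) with hac | hFw
  · exact Or.inr (Or.inl hac)
  right; right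
  have hsum : 1 - 2 * (a + b + c) ≠ 0 := by
    intro h0
    rw [h0, mul_zero] at hFv
    nlinarith [mul_pos hb hc]
  have hvw : (v - w) * (u + v + w) = 0 := by
    have : v * (u + v) * (1 - 2 * (a + b + c)) = w * (u + w) * (1 - 2 * (a + b + c)) := by
      linear_combination hFw - hFv
    linear_combination mul_right_cancel₀ hsum this
  have : v = w := sub_eq_zero.1 ((mul_eq_zero.1 hvw).resolve_right (by positivity))
  nlinarith

end ReducedEquations

section Parametrization

variable {a c s : ℝ}

-- `√(2√2 - 2) / 2` is the positive root of `4 s⁴ + 4 s² - 1`.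
theorem sqrt_two_mul_sqrt_two_sub_two_div_two_lt (hs : 0 < s)
    (h : 0 < 4 * s ^ 4 + 4 * s ^ 2 - 1) : √(2 * √2 - 2) / 2 < s := by
  have h2 : √2 ^ 2 = 2 := sq_sqrt zero_le_two
  have h2pos : 0 < √2 := by positivity
  have hroot : 2 * √2 - 2 < (2 * s) ^ 2 := by
    nlinarith [mul_pos (mul_pos hs hs) h2pos]
  have := (sqrt_lt' (by positivity)).2 hroot
  linarith

theorem exists_param_of_mul_eq_sq (ha : 0 < a) (hc : 0 < c) (hc' : c ≤ 1 / 2)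
    (h : 8 * a * (1 + (a - c)) = (1 + 2 * (a - c)) ^ 2) :
    ∃ s : ℝ, √(2 * √2 - 2) / 2 < s ∧ s < √2 / 2 ∧
      a = (2 * s ^ 2 - 1) ^ 2 / (8 * s ^ 2) ∧ c = (4 * s ^ 4 + 4 * s ^ 2 - 1) / (8 * s ^ 2) := by
  set t := 1 + (a - c)
  have htpos : 1 / 2 < t := by linarith
  set s := (2 * √t)⁻¹
  have hs : 0 < s := by positivity
  have hs2 : s ^ 2 = 1 / (4 * t) := by
    rw [inv_pow, mul_pow, sq_sqrt (by linarith)]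
    ring
  have hsa : a = (2 * s ^ 2 - 1) ^ 2 / (8 * s ^ 2) := by
    rw [hs2]
    field_simp
    linear_combination 4 * h
  have hsc : c = (4 * s ^ 4 + 4 * s ^ 2 - 1) / (8 * s ^ 2) := by
    rw [show s ^ 4 = (s ^ 2) ^ 2 by ring, hs2]
    field_simp
    linear_combination h
  refine ⟨s, sqrt_two_mul_sqrt_two_sub_two_div_two_lt hs ?_, ?_, hsa, hsc⟩
  · have : 0 < (4 * s ^ 4 + 4 * s ^ 2 - 1) / (8 * s ^ 2) := hsc ▸ hc
    exact (div_pos_iff_of_pos_right (by positivity)).1 this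
  · have hs2lt : (2 * s) ^ 2 < 2 := by
      rw [mul_pow, hs2]
      field_simp
      linarith
    have := (lt_sqrt (by positivity)).2 hs2lt
    linarith

theorem eq_or_exists_param_of_reduced {u v w : ℝ} (ha : 0 < a) (hc : 0 < c) (hc' : c ≤ 1 / 2)
    (hu : 0 < u) (hv : 0 < v) (hu2 : u ^ 2 = a + c) (hv2 : v ^ 2 = a + c) (hw2 : w ^ 2 = a + a)
    (h : u * (v * w + 2 * a * c - 2 * a ^ 2) = a * v + c * w) :
    a = c ∨ ∃ s : ℝ, √(2 * √2 - 2) / 2 < s ∧ s < √2 / 2 ∧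
      a = (2 * s ^ 2 - 1) ^ 2 / (8 * s ^ 2) ∧ c = (4 * s ^ 4 + 4 * s ^ 2 - 1) / (8 * s ^ 2) := by
  have huv : u = v := (pow_left_inj₀ hu.le hv.le two_ne_zero).1 (hu2.trans hv2.symm)
  subst huv
  have hw : w = u * (1 + 2 * a - 2 * c) := by
    have hmul : a * (w - u * (1 + 2 * a - 2 * c)) = 0 := by
      linear_combination h - w * hu2
    linarith [(mul_eq_zero.1 hmul).resolve_left ha.ne']
  by_cases hac : a = c
  · exact Or.inl hac
  refine Or.inr (exists_param_of_mul_eq_sq ha hc hc' ?_)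
  have hcubic : (a - c) * ((1 + 2 * (a - c)) ^ 2 - 8 * a * (1 + (a - c))) = 0 := by
    rw [hw, mul_pow, hu2] at hw2
    linear_combination -hw2
  linarith [(mul_eq_zero.1 hcubic).resolve_left (sub_ne_zero.2 hac)]

end Parametrization

theorem sigma_zero_parameter_classification (a1 a2 a3 : ℝ)
    (ha1 : a1 ∈ Ioc (0:ℝ) (1/2)) (ha2 : a2 ∈ Ioc (0:ℝ) (1/2)) (ha3 : a3 ∈ Ioc (0:ℝ) (1/2))
    (h : ∃ q : ℝ, 0 < q ∧
      eqS1 a1 a2 a3 (q * Real.sqrt (a2 + a3)) (q * Real.sqrt (a1 + a3)) (q * Real.sqrt (a1 + a2)) ∧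
      eqS2 a1 a2 a3 (q * Real.sqrt (a2 + a3)) (q * Real.sqrt (a1 + a3)) (q * Real.sqrt (a1 + a2))) :
    (a1 = a2 ∧ a2 = a3) ∨
    (∃ s : ℝ, Real.sqrt (2*Real.sqrt 2 - 2)/2 < s ∧ s < Real.sqrt 2/2 ∧
      ((a1 = (2*s^2 - 1)^2/(8*s^2) ∧ a2 = (2*s^2 - 1)^2/(8*s^2) ∧
          a3 = (4*s^4 + 4*s^2 - 1)/(8*s^2)) ∨
       (a1 = (2*s^2 - 1)^2/(8*s^2) ∧ a3 = (2*s^2 - 1)^2/(8*s^2) ∧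
          a2 = (4*s^4 + 4*s^2 - 1)/(8*s^2)) ∨
       (a2 = (2*s^2 - 1)^2/(8*s^2) ∧ a3 = (2*s^2 - 1)^2/(8*s^2) ∧
          a1 = (4*s^4 + 4*s^2 - 1)/(8*s^2)))) := by
  obtain ⟨ha1, ha1'⟩ := ha1
  obtain ⟨ha2, ha2'⟩ := ha2
  obtain ⟨ha3, ha3'⟩ := ha3
  obtain ⟨q, hq, hS1, hS2⟩ := h
  have hu : 0 < √(a2 + a3) := sqrt_pos.2 (by linarith)
  have hv : 0 < √(a1 + a3) := sqrt_pos.2 (by linarith)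
  have hw : 0 < √(a1 + a2) := sqrt_pos.2 (by linarith)
  have hu2 : √(a2 + a3) ^ 2 = a2 + a3 := sq_sqrt (by linarith)
  have hv2 : √(a1 + a3) ^ 2 = a1 + a3 := sq_sqrt (by linarith)
  have hw2 : √(a1 + a2) ^ 2 = a1 + a2 := sq_sqrt (by linarith)
  have e1 := reduced_of_eqS1 hq.ne' hu.ne' hu2 hv2 hw2 hS1
  have e2 := reduced_of_eqS1 hq.ne' hv.ne' hv2 hu2 (by linarith) (eqS2_iff_eqS1.1 hS2)
  rcases two_params_eq_of_reduced ha1 ha2 ha3 hu hv hw hu2 hv2 hw2 e1 e2 with rfl | rfl | rfl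
  · rcases eq_or_exists_param_of_reduced ha1 ha3 ha3' hu hv hu2 hv2 hw2 e1 with h | ⟨s, hs⟩
    · exact Or.inl ⟨rfl, h⟩
    · exact Or.inr ⟨s, hs.1, hs.2.1, Or.inl ⟨hs.2.2.1, hs.2.2⟩⟩
  · rcases eq_or_exists_param_of_reduced ha1 ha2 ha2' hu hw (by linarith) hw2 hv2
      (by linear_combination e1) with h | ⟨s, hs⟩
    · exact Or.inl ⟨h, h.symm⟩
    · exact Or.inr ⟨s, hs.1, hs.2.1, Or.inr (Or.inl ⟨hs.2.2.1, hs.2.2⟩)⟩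
  · rcases eq_or_exists_param_of_reduced ha2 ha1 ha1' hv hw (by linarith) (by linarith) hu2
      (by linear_combination e2) with h | ⟨s, hs⟩
    · exact Or.inl ⟨h.symm, rfl⟩
    · exact Or.inr ⟨s, hs.1, hs.2.1, Or.inr (Or.inr ⟨hs.2.2.1, hs.2.2⟩)⟩
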